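/- Let d ≥ 3 be an integer such that both d and (d−1)/2 are odd (so that (d+1)/4 is an integer). Then the number of points in 𝒞∖L is C(d,(d−1)/2) · ( 2^{(d+1)/2} − C((d+1)/2,(d+1)/4) ), where C(·,·) denotes the binomial coefficient. -/

import Mathlib

/-!
A point of `𝒞` is determined by the set `S` of its coordinates equal to `1/2`, with
`|S| = (d-1)/2`, and the set `T ⊆ Sᶜ` of its coordinates equal to `1`; its coordinate sum is
`|S|/2 + |T|`. Writing `d = 4a + 3`, it lies in `L` iff `a + 1/2 ≤ |T| ≤ a + 3/2`, i.e. iff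
`|T| = (d+1)/4`. So `𝒞 ∖ L` is counted by choosing `S` in `C(d, (d-1)/2)` ways and then any
subset `T` of the `(d+1)/2` remaining coordinates except those of size `(d+1)/4`.
-/

open Set Pointwise

noncomputable section

variable (d : ℕ)

/-- The vertices of the hypercube `[0,1]^d`. -/
def cubeVerts : Set (Fin d → ℝ) := {x | ∀ i, x i = 0 ∨ x i = 1}

/-- The set `𝒞` of centers of the `(d-1)/2`-dimensional faces of `[0,1]^d`: points with
exactly `(d-1)/2` coordinates equal to `1/2` and all remaining coordinates in `{0,1}`. -/
def centerSet : Set (Fin d → ℝ) :=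
  {x | (∀ i, x i = 0 ∨ x i = 1/2 ∨ x i = 1) ∧ {i | x i = 1/2}.ncard = (d - 1) / 2}

/-- The slab `L` bounded by the hyperplanes `H_{(d-1)/2}` and `H_{(d+1)/2}`. -/
def slabL : Set (Fin d → ℝ) :=
  {x | ((d : ℝ) - 1) / 2 ≤ ∑ i, x i ∧ ∑ i, x i ≤ ((d : ℝ) + 1) / 2}

/-- The set `𝒱 = (𝒞 ∖ L) ∪ ({0,1}^d ∩ L)`. -/
def vSet : Set (Fin d → ℝ) := (centerSet d \ slabL d) ∪ (cubeVerts d ∩ slabL d)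

/-- The polytope `Ξ`, the convex hull of `𝒱`. -/
def Xi : Set (Fin d → ℝ) := convexHull ℝ (vSet d)

open Finset

lemma card_powerset_filter_card_ne {α : Type*} (s : Finset α) (t : ℕ) :
    #{u ∈ s.powerset | #u ≠ t} = 2 ^ #s - (#s).choose t := by
  have h := card_filter_add_card_filter_not (s := s.powerset) (fun u => #u = t)
  rw [← powersetCard_eq_filter, card_powersetCard, card_powerset] at h
  simp only [ne_eq]
  omega

def faceCenters (ι : Type*) (k : ℕ) : Set (ι → ℝ) :=
  {x | (∀ i, x i = 0 ∨ x i = 1/2 ∨ x i = 1) ∧ {i | x i = 1/2}.ncard = k}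

section FaceCenter

variable {ι : Type*} [DecidableEq ι] {S T : Finset ι} {i : ι}

/-- The center of the face of `[0,1]^ι` whose free coordinates are `S` and whose other
coordinates are `1` on `T` and `0` elsewhere. -/
def faceCenter (S T : Finset ι) : ι → ℝ :=
  fun i => if i ∈ S then 1/2 else if i ∈ T then 1 else 0

lemma faceCenter_eq_half_iff : faceCenter S T i = 1/2 ↔ i ∈ S := by
  unfold faceCenter; split_ifs <;> norm_num [*]

lemma faceCenter_eq_one_iff (h : Disjoint S T) : faceCenter S T i = 1 ↔ i ∈ T := by
  have : i ∈ S → i ∉ T := fun hi => disjoint_left.mp h hi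
  unfold faceCenter; split_ifs <;> norm_num [*]

lemma faceCenter_eq_add (h : Disjoint S T) (i : ι) :
    faceCenter S T i = (if i ∈ S then 1/2 else 0) + (if i ∈ T then 1 else 0) := by
  have : i ∈ S → i ∉ T := fun hi => disjoint_left.mp h hi
  unfold faceCenter; split_ifs <;> simp_all

lemma faceCenter_mem_faceCenters (S T : Finset ι) : faceCenter S T ∈ faceCenters ι #S := by
  refine ⟨fun i => ?_, ?_⟩
  · unfold faceCenter; split_ifs <;> simp
  · simp only [faceCenter_eq_half_iff]
    exact Set.ncard_coe_finset S

lemma injOn_faceCenter : Set.InjOn (Sigma.uncurry (faceCenter (ι := ι)))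
    {p | Disjoint p.1 p.2} := by
  rintro ⟨S, T⟩ hST ⟨S', T'⟩ hST' h
  obtain rfl : S = S' := by
    ext i
    rw [← faceCenter_eq_half_iff (T := T), ← faceCenter_eq_half_iff (T := T')]
    exact Eq.congr_left (congrFun h i)
  obtain rfl : T = T' := by
    ext i
    rw [← faceCenter_eq_one_iff hST, ← faceCenter_eq_one_iff hST']
    exact Eq.congr_left (congrFun h i)
  rfl

variable [Fintype ι]

lemma sum_faceCenter (h : Disjoint S T) : ∑ i, faceCenter S T i = #S / 2 + #T := by
  simp only [faceCenter_eq_add h, sum_add_distrib, sum_ite_mem, Finset.univ_inter, sum_const,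
    nsmul_eq_mul]
  ring

end FaceCenter

section CubeFaces

variable {ι : Type*} [Fintype ι] [DecidableEq ι]

/-- The `k`-dimensional faces of `[0,1]^ι`, each encoded by its set `S` of free coordinates
and the set `T` of coordinates fixed to `1`. -/
def cubeFaces (ι : Type*) [Fintype ι] [DecidableEq ι] (k : ℕ) :
    Finset ((_ : Finset ι) × Finset ι) :=
  (powersetCard k univ).sigma fun S => Sᶜ.powerset

lemma mem_cubeFaces {k : ℕ} {p : (_ : Finset ι) × Finset ι} :
    p ∈ cubeFaces ι k ↔ #p.1 = k ∧ Disjoint p.1 p.2 := by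
  rw [cubeFaces, mem_sigma, mem_powersetCard_univ, Finset.mem_powerset,
    Finset.subset_compl_iff_disjoint_left]

lemma faceCenters_eq_image (k : ℕ) :
    faceCenters ι k = Sigma.uncurry faceCenter '' cubeFaces ι k := by
  ext x
  constructor
  · rintro ⟨hx, hk⟩
    refine ⟨⟨({i | x i = 1/2} : Finset ι), ({i | x i = 1} : Finset ι)⟩,
      mem_cubeFaces.2 ⟨?_, ?_⟩, ?_⟩
    · rw [← hk, ← Set.ncard_coe_finset, coe_filter_univ]
    · exact disjoint_filter.2 fun i _ h₁ h₂ => by norm_num [h₁] at h₂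
    · funext i
      rcases hx i with h | h | h <;> norm_num [Sigma.uncurry, faceCenter, h]
  · rintro ⟨⟨S, T⟩, hp, rfl⟩
    exact (mem_cubeFaces.1 hp).1 ▸ faceCenter_mem_faceCenters S T

lemma card_cubeFaces_filter_card_ne (k t : ℕ) :
    #{p ∈ cubeFaces ι k | #p.2 ≠ t} =
      (Fintype.card ι).choose k *
        (2 ^ (Fintype.card ι - k) - (Fintype.card ι - k).choose t) := by
  rw [cubeFaces, filter_sigma, card_sigma, sum_const_nat fun S hS => ?_, card_powersetCard,
    card_univ]
  rw [card_powerset_filter_card_ne, card_compl, mem_powersetCard_univ.1 hS]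

end CubeFaces

lemma faceCenter_mem_slabL_iff (hodd : Odd d) (hodd' : Odd ((d - 1) / 2)) {S T : Finset (Fin d)}
    (hS : #S = (d - 1) / 2) (hST : Disjoint S T) :
    faceCenter S T ∈ slabL d ↔ #T = (d + 1) / 4 := by
  obtain ⟨a, ha⟩ := hodd'
  have hd : d = 4 * a + 3 := by obtain ⟨b, rfl⟩ := hodd; omega
  have hdR : (d : ℝ) = 4 * a + 3 := by exact_mod_cast hd
  rw [slabL, Set.mem_ofPred_eq, sum_faceCenter hST, hS, ha, hdR, show (d + 1) / 4 = a + 1 by omega]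
  push_cast
  constructor
  · rintro ⟨h₁, h₂⟩
    have h₁' : 2 * a + 1 ≤ 2 * #T := by
      exact_mod_cast (by linarith : (2 * a + 1 : ℝ) ≤ 2 * #T)
    have h₂' : 2 * #T ≤ 2 * a + 3 := by
      exact_mod_cast (by linarith : (2 * #T : ℝ) ≤ 2 * a + 3)
    omega
  · intro hT
    rw [hT]
    push_cast
    constructor <;> linarith

lemma centerSet_diff_slabL_eq_image (hodd : Odd d) (hodd' : Odd ((d - 1) / 2)) :
    centerSet d \ slabL d =
      Sigma.uncurry faceCenter ''
        ↑{p ∈ cubeFaces (Fin d) ((d - 1) / 2) | #p.2 ≠ (d + 1) / 4} := by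
  change faceCenters (Fin d) ((d - 1) / 2) \ _ = _
  rw [faceCenters_eq_image, ← Set.image_sdiff_preimage, coe_filter]
  congr 1
  ext p
  simp only [Set.mem_sdiff, mem_coe, Set.mem_preimage, Set.mem_ofPred_eq]
  exact and_congr_right fun hp =>
    (faceCenter_mem_slabL_iff d hodd hodd' (mem_cubeFaces.1 hp).1 (mem_cubeFaces.1 hp).2).not

theorem card_centerSet_diff_slab (hodd : Odd d) (hodd' : Odd ((d - 1) / 2)) :
    ((centerSet d \ slabL d).ncard : ℤ) =
      (d.choose ((d - 1) / 2) : ℤ) *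
        ((2 : ℤ) ^ ((d + 1) / 2) - (((d + 1) / 2).choose ((d + 1) / 4) : ℤ)) := by
  have hinj : Set.InjOn (Sigma.uncurry (faceCenter (ι := Fin d)))
      ↑{p ∈ cubeFaces (Fin d) ((d - 1) / 2) | #p.2 ≠ (d + 1) / 4} :=
    injOn_faceCenter.mono fun p hp => by
      rw [mem_coe, mem_filter, mem_cubeFaces] at hp
      exact hp.1.2
  have hfree : d - (d - 1) / 2 = (d + 1) / 2 := by obtain ⟨b, rfl⟩ := hodd; omega
  rw [centerSet_diff_slabL_eq_image d hodd hodd', hinj.ncard_image, Set.ncard_coe_finset,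
    card_cubeFaces_filter_card_ne, Fintype.card_fin, hfree, Nat.cast_mul,
    Nat.cast_sub (Nat.choose_le_two_pow _ _), Nat.cast_pow, Nat.cast_ofNat]
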